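/- Let A be a nonnegative irreducible real n×n matrix with n ≥ 1, let r ≥ 0 and let x ∈ ℝ^n with x ≥ 0, A·x − r·x ≥ 0 (entrywise) and A·x ≠ r·x. Then there exists r' > r and a vector y ∈ ℝ^n with y ≥ 0, Σᵢ yᵢ = 1, and A·y − r'·y ≥ 0 entrywise. -/

import Mathlib

/-!
Let `z = A x - r x ≥ 0`, `z ≠ 0`. By irreducibility, `C = ∑_{m < N} A ^ m` is entrywise positive
for `N` large, and `C` commutes with `A`. Hence `w = C x` and `C z = A w - r w` are both entrywise
positive, so `A w - r w ≥ ε w` for some `ε > 0`; normalising `w` gives the vector `y` for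
`r' = r + ε`.
-/

open Matrix Finset

theorem exists_pos_forall_mul_le {ι R : Type*} [Finite ι] [Field R] [LinearOrder R]
    [IsStrictOrderedRing R] {v w : ι → R} (hv : ∀ i, 0 < v i) (hw : ∀ i, 0 < w i) :
    ∃ ε > 0, ∀ i, ε * w i ≤ v i := by
  cases isEmpty_or_nonempty ι
  · exact ⟨1, one_pos, isEmptyElim⟩
  · obtain ⟨j, hj⟩ := Finite.exists_min fun i => v i / w i
    exact ⟨v j / w j, div_pos (hv j) (hw j), fun i => (le_div_iff₀ (hw i)).1 (hj i)⟩

namespace Matrix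

variable {ι R : Type*} [Fintype ι]

theorem exists_sum_range_pow_apply_pos [DecidableEq ι] [Semiring R] [PartialOrder R]
    [IsOrderedRing R] {A : Matrix ι ι R} (hA : ∀ i j, 0 ≤ A i j)
    (hirr : ∀ i j, ∃ k, 0 < (A ^ k) i j) :
    ∃ N, ∀ i j, 0 < (∑ m ∈ range N, A ^ m) i j := by
  choose k hk using hirr
  refine ⟨univ.sup (fun p : ι × ι => k p.1 p.2) + 1, fun i j => ?_⟩
  have hmem : k i j ∈ range (univ.sup (fun p : ι × ι => k p.1 p.2) + 1) :=
    mem_range.2 (Nat.lt_succ_of_le (le_sup (f := fun p : ι × ι => k p.1 p.2) (mem_univ (i, j))))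
  rw [sum_apply]
  exact (hk i j).trans_le (single_le_sum (fun m _ => pow_apply_nonneg hA m i j) hmem)

theorem mulVec_apply_pos [Semiring R] [PartialOrder R] [IsStrictOrderedRing R]
    {C : Matrix ι ι R} (hC : ∀ i j, 0 < C i j) {x : ι → R} (hx : 0 ≤ x) (hx0 : x ≠ 0) (i : ι) :
    0 < (C *ᵥ x) i := by
  obtain ⟨j, hj⟩ := Function.ne_iff.1 hx0
  exact (mul_pos (hC i j) ((hx j).lt_of_ne' hj)).trans_le
    (single_le_sum (fun m _ => mul_nonneg (hC i m).le (hx m)) (mem_univ j))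

variable [Field R] [LinearOrder R] [IsStrictOrderedRing R]

theorem exists_add_smul_le_mulVec_mulVec {A C : Matrix ι ι R} (hC : ∀ i j, 0 < C i j)
    (hAC : Commute A C) {r : R} {x : ι → R} (hx : 0 ≤ x) (hAx : r • x ≤ A *ᵥ x)
    (hne : A *ᵥ x ≠ r • x) :
    (∀ i, 0 < (C *ᵥ x) i) ∧ ∃ ε > 0, (r + ε) • (C *ᵥ x) ≤ A *ᵥ (C *ᵥ x) := by
  have hx0 : x ≠ 0 := by
    rintro rfl
    simp at hne
  have hCz : A *ᵥ (C *ᵥ x) - r • (C *ᵥ x) = C *ᵥ (A *ᵥ x - r • x) := by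
    rw [mulVec_mulVec, hAC.eq, ← mulVec_mulVec, mulVec_sub, mulVec_smul]
  have hw := mulVec_apply_pos hC hx hx0
  have hv := mulVec_apply_pos hC (sub_nonneg.2 hAx) (sub_ne_zero.2 hne)
  obtain ⟨ε, hε, hεw⟩ := exists_pos_forall_mul_le hv hw
  refine ⟨hw, ε, hε, ?_⟩
  rw [add_smul, ← le_sub_iff_add_le', hCz]
  exact hεw

theorem exists_mem_stdSimplex_smul_le_mulVec {A : Matrix ι ι R} {r : R} {w : ι → R}
    (hw : 0 ≤ w) (hw0 : w ≠ 0) (h : r • w ≤ A *ᵥ w) :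
    ∃ y ∈ stdSimplex R ι, r • y ≤ A *ᵥ y := by
  have hS : 0 < ∑ i, w i := by
    obtain ⟨j, hj⟩ := Function.ne_iff.1 hw0
    exact sum_pos' (fun i _ => hw i) ⟨j, mem_univ j, (hw j).lt_of_ne' hj⟩
  refine ⟨(∑ i, w i)⁻¹ • w, ⟨fun i => ?_, ?_⟩, ?_⟩
  · exact mul_nonneg (inv_nonneg.2 hS.le) (hw i)
  · simp only [Pi.smul_apply, smul_eq_mul, ← mul_sum, inv_mul_cancel₀ hS.ne']
  · rw [mulVec_smul, smul_comm]
    exact smul_le_smul_of_nonneg_left h (inv_nonneg.2 hS.le)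

end Matrix

theorem exists_larger_collatz_wielandt_general {n : ℕ}
    (A : Matrix (Fin n) (Fin n) ℝ)
    (hA : ∀ i j, 0 ≤ A i j)
    (hirr : ∀ i j, ∃ k : ℕ, 1 ≤ k ∧ 0 < (A ^ k) i j)
    (r : ℝ) (x : Fin n → ℝ) (hx : ∀ i, 0 ≤ x i)
    (hAx : ∀ i, 0 ≤ A.mulVec x i - r * x i)
    (hne : A.mulVec x ≠ r • x) :
    ∃ r' : ℝ, r < r' ∧ ∃ y : Fin n → ℝ,
      (∀ i, 0 ≤ y i) ∧ (∑ i, y i) = 1 ∧ ∀ i, 0 ≤ A.mulVec y i - r' * y i := by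
  obtain ⟨N, hC⟩ := exists_sum_range_pow_apply_pos hA fun i j => (hirr i j).imp fun _ => And.right
  have hAC : Commute A (∑ m ∈ range N, A ^ m) := Commute.sum_right _ _ _ fun m _ => .self_pow A m
  obtain ⟨hw, ε, hε, hεw⟩ :=
    exists_add_smul_le_mulVec_mulVec hC hAC hx (fun i => sub_nonneg.1 (hAx i)) hne
  obtain ⟨j⟩ : Nonempty (Fin n) := by
    by_contra h
    have := not_nonempty_iff.1 h
    exact hne (Subsingleton.elim _ _)
  obtain ⟨y, ⟨hy0, hy1⟩, hy⟩ := exists_mem_stdSimplex_smul_le_mulVec (fun i => (hw i).le)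
    (fun h => (hw j).ne' (congrFun h j)) hεw
  exact ⟨r + ε, lt_add_of_pos_right r hε, y, hy0, hy1, fun i => sub_nonneg.2 (hy i)⟩

theorem exists_larger_collatz_wielandt {n : ℕ} (hn : 1 ≤ n)
    (A : Matrix (Fin n) (Fin n) ℝ)
    (hA : ∀ i j, 0 ≤ A i j)
    (hirr : ∀ i j, ∃ k : ℕ, 1 ≤ k ∧ 0 < (A ^ k) i j)
    (r : ℝ) (hr : 0 ≤ r) (x : Fin n → ℝ) (hx : ∀ i, 0 ≤ x i)
    (hAx : ∀ i, 0 ≤ A.mulVec x i - r * x i)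
    (hne : A.mulVec x ≠ r • x) :
    ∃ r' : ℝ, r < r' ∧ ∃ y : Fin n → ℝ,
      (∀ i, 0 ≤ y i) ∧ (∑ i, y i) = 1 ∧ ∀ i, 0 ≤ A.mulVec y i - r' * y i :=
  exists_larger_collatz_wielandt_general A hA hirr r x hx hAx hne
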